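/- arXiv:2301.13266 — 6 statements merged into one kernel-verified Lean document; each statement's English description precedes it below -/
import Mathlib

section
/- Complete characterization of consistent cuts by per-stream extents: a set C of events is a consistent cut if and only if there exist integers m_1,…,m_n ∈ {−1,0,…,N} such that C = {(i,t) : 1 ≤ i ≤ n, 0 ≤ t ≤ m_i} and m_i ≥ m_j − ε − 1 for all streams i, j (where m_i = −1 encodes that stream i has no event in C). -/
/-- An event is a pair (stream index, timestamp), with streams `Fin n` and
timestamps `Fin (N+1)` (i.e. `{0,…,N}`). The generating relation `R` with
clock-skew bound `ε`: same-stream order, and cross-stream order with skew. -/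
def genR (n N ε : ℕ) (e f : Fin n × Fin (N + 1)) : Prop :=
  (e.1 = f.1 ∧ e.2 < f.2) ∨ (e.2 : ℕ) + ε < (f.2 : ℕ)

/-- The happened-before relation `⇝` with skew `ε`: transitive closure of `R`. -/
def hb (n N ε : ℕ) : Fin n × Fin (N + 1) → Fin n × Fin (N + 1) → Prop :=
  Relation.TransGen (genR n N ε)

/-- A consistent cut: a set `C` of events such that `e ∈ C` and `f ⇝ e` imply `f ∈ C`. -/
def ConsistentCut (n N ε : ℕ) (C : Set (Fin n × Fin (N + 1))) : Prop :=
  ∀ e ∈ C, ∀ f, hb n N ε f e → f ∈ C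

/-!
A consistent cut is closed downwards along each stream, so on stream `i` it is a prefix
`{0, …, m_i}` of the timestamps. Closure under the cross-stream edges `(i, t) R (j, s)`,
`t + ε < s`, says exactly that the first missing timestamp `m_i + 1` of stream `i` is not
more than `ε` below `m_j`. Conversely, closure under `R` alone already gives closure under
its transitive closure.
-/

open Finset

theorem mem_iff_lt_card_of_isLowerSet {m : ℕ} {S : Finset (Fin m)}
    (hS : IsLowerSet (S : Set (Fin m))) (t : Fin m) : t ∈ S ↔ (t : ℕ) < #S := by
  constructor
  · intro ht
    calc (t : ℕ) < #(Iic t) := by simp [Fin.card_Iic]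
      _ ≤ #S := card_le_card fun s hs => hS (mem_Iic.1 hs) ht
  · intro hlt
    by_contra ht
    have hsub : S ⊆ Iio t := fun s hs => mem_Iio.2 (lt_of_not_ge fun hts => ht (hS hts hs))
    have := card_le_card hsub
    rw [Fin.card_Iio] at this
    omega

section Cut

variable {n N ε : ℕ} {C : Set (Fin n × Fin (N + 1))}

theorem consistentCut_of_genR (h : ∀ {f e}, genR n N ε f e → e ∈ C → f ∈ C) :
    ConsistentCut n N ε C :=
  fun _ he _ hfe => Relation.TransGen.closed' (P := (· ∈ C)) h hfe he

/-- For a consistent cut, the events of stream `i` in `C` are a prefix of the timestamps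
(`mem_iff_le_extent`), so its size minus one is the last timestamp, or `-1` if it is empty. -/
noncomputable def extent (C : Set (Fin n × Fin (N + 1))) (i : Fin n) : ℤ :=
  open Classical in #{t | (i, t) ∈ C} - 1

theorem ConsistentCut.mem_of_le (hC : ConsistentCut n N ε C) {i : Fin n} {t s : Fin (N + 1)}
    (hts : t ≤ s) (hs : (i, s) ∈ C) : (i, t) ∈ C := by
  rcases hts.eq_or_lt with rfl | hlt
  · exact hs
  · exact hC _ hs _ (.single (.inl ⟨rfl, hlt⟩))

theorem ConsistentCut.mem_iff_le_extent (hC : ConsistentCut n N ε C) (i : Fin n)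
    (t : Fin (N + 1)) : (i, t) ∈ C ↔ (t : ℤ) ≤ extent C i := by
  classical
  have hlower : IsLowerSet (({t | (i, t) ∈ C} : Finset (Fin (N + 1))) : Set (Fin (N + 1))) :=
    fun s t hts hs => by simpa using hC.mem_of_le hts (by simpa using hs)
  have := mem_iff_lt_card_of_isLowerSet hlower t
  simp only [mem_filter, mem_univ, true_and] at this
  rw [this, extent]
  omega

theorem extent_mem_Icc (i : Fin n) : extent C i ∈ Set.Icc (-1) (N : ℤ) := by
  classical
  have := (card_le_univ ({t | (i, t) ∈ C} : Finset (Fin (N + 1)))).trans_eq (Fintype.card_fin _)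
  simp only [extent, Set.mem_Icc]
  omega

theorem ConsistentCut.mem_of_add_lt (hC : ConsistentCut n N ε C) (i : Fin n) {j : Fin n}
    {t s : Fin (N + 1)} (hts : (t : ℕ) + ε < s) (hs : (j, s) ∈ C) : (i, t) ∈ C :=
  hC _ hs _ (.single (.inr hts))

/-- The first event of stream `i` outside `C` would precede the last event of stream `j` in `C`
by more than the skew. -/
theorem ConsistentCut.extent_sub_le (hC : ConsistentCut n N ε C) (i j : Fin n) :
    extent C j - ε - 1 ≤ extent C i := by
  have hi := extent_mem_Icc (C := C) i
  have hj := extent_mem_Icc (C := C) j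
  rw [Set.mem_Icc] at hi hj
  by_contra! h
  let s : Fin (N + 1) := ⟨(extent C j).toNat, by omega⟩
  let t : Fin (N + 1) := ⟨(extent C i + 1).toNat, by omega⟩
  have hs : (j, s) ∈ C := (hC.mem_iff_le_extent j s).2 (by simp only [s]; omega)
  have ht := (hC.mem_iff_le_extent i t).1 (hC.mem_of_add_lt i (by simp only [s, t]; omega) hs)
  simp only [t] at ht
  omega

end Cut

theorem cut_characterization_general (n N ε : ℕ)
    (C : Set (Fin n × Fin (N + 1))) :
    ConsistentCut n N ε C ↔
      ∃ m : Fin n → ℤ,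
        (∀ i, -1 ≤ m i ∧ m i ≤ (N : ℤ)) ∧
        (∀ i j, m j - (ε : ℤ) - 1 ≤ m i) ∧
        (∀ (i : Fin n) (t : Fin (N + 1)), (i, t) ∈ C ↔ (t : ℤ) ≤ m i) := by
  constructor
  · intro hC
    exact ⟨extent C, extent_mem_Icc, hC.extent_sub_le, hC.mem_iff_le_extent⟩
  · rintro ⟨m, -, hskew, hmem⟩
    refine consistentCut_of_genR ?_
    rintro ⟨i, t⟩ ⟨j, s⟩ hts hs
    rw [hmem] at hs ⊢
    rcases hts with ⟨rfl, hlt⟩ | hlt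
    · exact (Int.ofNat_lt.2 hlt).le.trans hs
    · have := hskew i j
      dsimp only at hlt
      omega

/-- complete characterization of consistent cuts by per-stream
extents: `C` is a consistent cut iff there exist `m_1,…,m_n ∈ {−1,…,N}` with
`C = {(i,t) : t ≤ m_i}` and `m_i ≥ m_j − ε − 1` for all streams `i, j`
(`m_i = −1` encodes that stream `i` has no event in `C`). -/
theorem cut_characterization (n N ε : ℕ) (hn : 1 ≤ n) (hε : 1 ≤ ε)
    (C : Set (Fin n × Fin (N + 1))) :
    ConsistentCut n N ε C ↔
      ∃ m : Fin n → ℤ,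
        (∀ i, -1 ≤ m i ∧ m i ≤ (N : ℤ)) ∧
        (∀ i j, m j - (ε : ℤ) - 1 ≤ m i) ∧
        (∀ (i : Fin n) (t : Fin (N + 1)), (i, t) ∈ C ↔ (t : ℤ) ≤ m i) :=
  cut_characterization_general n N ε C
end

section
/- Frontier skew bound: if C is a consistent cut and streams i and j both have events in C, with frontier times m_i(C) and m_j(C), then |m_i(C) − m_j(C)| ≤ ε + 1. Moreover, if some stream j has an event in C with timestamp greater than ε, then every stream has an event in C. -/
namespace ConsistentCut

variable {n N ε : ℕ} {C : Set (Fin n × Fin (N + 1))}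

theorem mem_of_add_lt_s5 (hC : ConsistentCut n N ε C) {j : Fin n} {t : Fin (N + 1)}
    (ht : (j, t) ∈ C) (i : Fin n) {s : Fin (N + 1)} (hst : (s : ℕ) + ε < t) : (i, s) ∈ C :=
  hC _ ht _ (.single (Or.inr hst))

theorem exists_mem_of_lt (hC : ConsistentCut n N ε C) {j : Fin n} {t : Fin (N + 1)}
    (ht : (j, t) ∈ C) (hεt : ε < t) (i : Fin n) : ∃ s, (i, s) ∈ C :=
  ⟨0, hC.mem_of_add_lt_s5 ht i (by simpa using hεt)⟩

/-- If `mj` bounds the times of stream `j` in `C`, then stream `j` at time `mj + 1` is not in `C`,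
so no event of `C` can be later than `mj + 1 + ε`. -/
theorem val_le_add_of_forall_le (hC : ConsistentCut n N ε C) {i j : Fin n} {mi mj : Fin (N + 1)}
    (hmi : (i, mi) ∈ C) (hmj : ∀ t : Fin (N + 1), (j, t) ∈ C → t ≤ mj) :
    (mi : ℕ) ≤ mj + ε + 1 := by
  by_contra! hlt
  have hsucc : (mj : ℕ) + 1 < N + 1 := by omega
  have hmem : (j, (⟨mj + 1, hsucc⟩ : Fin (N + 1))) ∈ C :=
    hC.mem_of_add_lt_s5 hmi j (by simp only; omega)
  exact absurd (hmj _ hmem) (by simp [Fin.le_def])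

end ConsistentCut

theorem frontier_skew_bound_general (n N ε : ℕ)
    (C : Set (Fin n × Fin (N + 1))) (hC : ConsistentCut n N ε C) :
    (∀ (i j : Fin n) (mi mj : Fin (N + 1)),
      ((i, mi) ∈ C ∧ ∀ t : Fin (N + 1), (i, t) ∈ C → t ≤ mi) →
      ((j, mj) ∈ C ∧ ∀ t : Fin (N + 1), (j, t) ∈ C → t ≤ mj) →
      |(mi : ℤ) - (mj : ℤ)| ≤ (ε : ℤ) + 1) ∧
    (∀ (j : Fin n) (t : Fin (N + 1)), (j, t) ∈ C → (ε : ℕ) < (t : ℕ) →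
      ∀ i : Fin n, ∃ s : Fin (N + 1), (i, s) ∈ C) :=
  ⟨fun _ _ _ _ hi hj => abs_le.2
      ⟨by linarith [hC.val_le_add_of_forall_le hj.1 hi.2],
        by linarith [hC.val_le_add_of_forall_le hi.1 hj.2]⟩,
    fun _ _ ht hεt => hC.exists_mem_of_lt ht hεt⟩

/-- frontier skew bound: if streams `i` and `j` both have events
in a consistent cut `C`, with frontier times `mi` and `mj` (largest timestamps
of the respective streams in `C`), then `|mi − mj| ≤ ε + 1`.  Moreover, if some
stream `j` has an event in `C` with timestamp greater than `ε`, then every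
stream has an event in `C`. -/
theorem frontier_skew_bound (n N ε : ℕ) (hn : 1 ≤ n) (hε : 1 ≤ ε)
    (C : Set (Fin n × Fin (N + 1))) (hC : ConsistentCut n N ε C) :
    (∀ (i j : Fin n) (mi mj : Fin (N + 1)),
      ((i, mi) ∈ C ∧ ∀ t : Fin (N + 1), (i, t) ∈ C → t ≤ mi) →
      ((j, mj) ∈ C ∧ ∀ t : Fin (N + 1), (j, t) ∈ C → t ≤ mj) →
      |(mi : ℤ) - (mj : ℤ)| ≤ (ε : ℤ) + 1) ∧
    (∀ (j : Fin n) (t : Fin (N + 1)), (j, t) ∈ C → (ε : ℕ) < (t : ℕ) →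
      ∀ i : Fin n, ∃ s : Fin (N + 1), (i, s) ∈ C) :=
  frontier_skew_bound_general n N ε C hC
end

section
/- Every consistent cut's frontier lies inside a single ε-extended evaluation round: fix a round length k ≥ 1, and for a round index r ≥ 1 let the r-th window be the set of timestamps t with (r−1)·k − ε ≤ t ≤ r·k. Then for every nonempty consistent cut C there exists a round index r ≥ 1 (namely r = max(1, ⌈T/k⌉) where T is the maximum frontier time of C) such that the timestamp of every frontier event of C lies in the r-th window. -/
/-- every consistent cut's frontier lies inside a single
ε-extended evaluation round: fix a round length `k ≥ 1`; the `r`-th window is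
`{t : (r−1)·k − ε ≤ t ≤ r·k}`.  For every nonempty consistent cut `C`, with `T`
its maximum frontier time (the largest timestamp occurring in `C`), the round
index `r = max(1, ⌈T/k⌉)` satisfies `r ≥ 1` and the timestamp of every frontier
event of `C` lies in the `r`-th window. -/
theorem frontier_in_round (n N ε : ℕ) (hn : 1 ≤ n) (hε : 1 ≤ ε)
    (k : ℕ) (hk : 1 ≤ k)
    (C : Set (Fin n × Fin (N + 1))) (hC : ConsistentCut n N ε C)
    (hne : C.Nonempty) (T : ℕ)
    (hT1 : ∃ e ∈ C, (e.2 : ℕ) = T) (hT2 : ∀ e ∈ C, (e.2 : ℕ) ≤ T) :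
    ∃ r : ℕ, 1 ≤ r ∧ r = max 1 ((T + k - 1) / k) ∧
      ∀ (i : Fin n) (mi : Fin (N + 1)),
        ((i, mi) ∈ C ∧ ∀ t : Fin (N + 1), (i, t) ∈ C → t ≤ mi) →
        ((r : ℤ) - 1) * (k : ℤ) - (ε : ℤ) ≤ ((mi : ℕ) : ℤ) ∧
          ((mi : ℕ) : ℤ) ≤ (r : ℤ) * (k : ℤ) := by
  refine ⟨max 1 ((T + k - 1) / k), le_max_left _ _, rfl, ?_⟩
  rintro i mi ⟨hmem, hmax⟩
  obtain ⟨e, heC, heT⟩ := hT1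
  have hTN : T ≤ N := by have := e.2.isLt; omega
  have hmiT : (mi : ℕ) ≤ T := hT2 _ hmem
  -- claim: T ≤ mi + ε + 1
  have hclaim : T ≤ (mi : ℕ) + ε + 1 := by
    by_contra h
    push_neg at h
    have hs : (mi : ℕ) + 1 < N + 1 := by omega
    have hgen : genR n N ε (i, ⟨(mi : ℕ) + 1, hs⟩) e := by
      right; simp; omega
    have hin := hC e heC _ (Relation.TransGen.single hgen)
    have hle := hmax _ hin
    simp [Fin.le_def] at hle
  rcases Nat.eq_zero_or_pos T with hT0 | hT1'
  · subst hT0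
    have hr0 : (0 + k - 1) / k = 0 := Nat.div_eq_of_lt (by omega)
    rw [hr0]
    simp
    · have : ((mi : ℕ) : ℤ) ≤ 0 := by exact_mod_cast hmiT
      have : (0 : ℤ) ≤ (k : ℤ) := by positivity
      omega
  · set q := (T + k - 1) / k with hq
    have hq1 : 1 ≤ q := by
      rw [hq]
      rw [Nat.le_div_iff_mul_le (by omega)]
      omega
    have hrq : max 1 q = q := max_eq_right hq1
    rw [hrq]
    have hdiv := Nat.div_add_mod (T + k - 1) k
    have hmod := Nat.mod_lt (T + k - 1) (show 0 < k by omega)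
    obtain ⟨m, hm⟩ : ∃ m, k * q = m := ⟨_, rfl⟩
    obtain ⟨w, hw⟩ : ∃ w, (T + k - 1) % k = w := ⟨_, rfl⟩
    rw [hq] at hm
    rw [hm, hw] at hdiv
    rw [hw] at hmod
    -- T ≤ m and m ≤ T + k - 1
    have hTm : T ≤ m := by omega
    have hmT : m ≤ T + k - 1 := by omega
    have hqm : (q : ℤ) * k = m := by
      show ((((T + k - 1) / k : ℕ)) : ℤ) * k = m
      rw [← hm]; push_cast; ring
    have hc1 : (T : ℤ) ≤ ((mi : ℕ) : ℤ) + ε + 1 := by exact_mod_cast hclaim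
    have hc2 : (m : ℤ) + 1 ≤ (T : ℤ) + k := by exact_mod_cast (show m + 1 ≤ T + k by omega)
    have hc3 : ((mi : ℕ) : ℤ) ≤ (T : ℤ) := by exact_mod_cast hmiT
    have hc4 : (T : ℤ) ≤ (m : ℤ) := by exact_mod_cast hTm
    constructor
    · have he : ((q : ℤ) - 1) * k = (m : ℤ) - k := by rw [← hqm]; ring
      rw [he]
      omega
    · rw [hqm]
      omega
end

section
/- Soundness of the partially synchronous LOLA valuation: for every non-recursive LOLA stream expression e, every skew ε ≥ 1, and every position j ∈ {0,…,N}, the synchronous value is among the partially synchronous values, i.e., val_S(e)(j) ∈ val_PS^ε(e)(j). -/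
/-- Non-recursive LOLA stream expressions over a value type `T` and `m` input
stream variables: constants, stream variables, pointwise `k`-ary function
applications, and offset expressions `e[p,c]` with integer offset `p` and
default value `c`. -/
inductive LExpr (T : Type) (m : ℕ) : Type where
  | const : T → LExpr T m
  | var : Fin m → LExpr T m
  | app : (k : ℕ) → ((Fin k → T) → T) → (Fin k → LExpr T m) → LExpr T m
  | offset : LExpr T m → ℤ → T → LExpr T m

/-- The synchronous valuation `val_S` of a LOLA expression at position `j`,
given the trace length `N` and input streams `τ`. -/
def valS {T : Type} {m : ℕ} (N : ℕ) (τ : Fin m → ℕ → T) : LExpr T m → ℕ → T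
  | .const c, _ => c
  | .var i, j => τ i j
  | .app _ f es, j => f (fun l => valS N τ (es l) j)
  | .offset e p c, j =>
      if 0 ≤ (j : ℤ) + p ∧ (j : ℤ) + p ≤ (N : ℤ) then valS N τ e ((j : ℤ) + p).toNat
      else c

/-- The partially synchronous valuation `val_PS^ε` of a LOLA expression at
position `j`, assigning the set of values obtainable under clock skew `ε`. -/
def valPS {T : Type} {m : ℕ} (N : ℕ) (τ : Fin m → ℕ → T) (ε : ℕ) :
    LExpr T m → ℕ → Set T
  | .const c, _ => {c}
  | .var i, j =>
      {v | ∃ κ : ℕ, max 0 ((j : ℤ) - (ε : ℤ) + 1) ≤ (κ : ℤ) ∧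
        (κ : ℤ) ≤ min (N : ℤ) ((j : ℤ) + (ε : ℤ) - 1) ∧ τ i κ = v}
  | .app k f es, j =>
      {v | ∃ vs : Fin k → T, (∀ l, vs l ∈ valPS N τ ε (es l) j) ∧ f vs = v}
  | .offset e p c, j =>
      if 0 ≤ (j : ℤ) + p ∧ (j : ℤ) + p ≤ (N : ℤ) then valPS N τ ε e ((j : ℤ) + p).toNat
      else {c}

theorem self_mem_valPS_var {T : Type} {m : ℕ} {N ε j : ℕ} (τ : Fin m → ℕ → T) (i : Fin m)
    (hε : 1 ≤ ε) (hj : j ≤ N) : τ i j ∈ valPS N τ ε (.var i) j :=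
  ⟨j, by simp only [max_le_iff]; omega, by simp only [le_min_iff]; omega, rfl⟩

/-- soundness of the partially synchronous LOLA valuation: for
every non-recursive LOLA expression `e`, skew `ε ≥ 1`, and position
`j ∈ {0,…,N}`, the synchronous value is among the partially synchronous
values: `val_S(e)(j) ∈ val_PS^ε(e)(j)`. -/
theorem valS_mem_valPS {T : Type} {m : ℕ} (N : ℕ) (τ : Fin m → ℕ → T)
    (ε : ℕ) (hε : 1 ≤ ε) (e : LExpr T m) (j : ℕ) (hj : j ≤ N) :
    valS N τ e j ∈ valPS N τ ε e j := by
  induction e generalizing j with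
  | const c => exact rfl
  | var i => exact self_mem_valPS_var τ i hε hj
  | app k f es ih => exact ⟨fun l => valS N τ (es l) j, fun l => ih l j hj, rfl⟩
  | offset e p c ih =>
    simp only [valS, valPS]
    split_ifs with hjp
    · exact ih _ (by omega)
    · exact rfl
end

section
/- Monotonicity of the partially synchronous LOLA valuation in the skew: for every non-recursive LOLA stream expression e, every position j ∈ {0,…,N}, and skews 1 ≤ ε ≤ ε', one has val_PS^ε(e)(j) ⊆ val_PS^{ε'}(e)(j). -/
theorem valPS_var_mono_skew {T : Type} {m : ℕ} (N : ℕ) (τ : Fin m → ℕ → T) {ε ε' : ℕ}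
    (hεε : ε ≤ ε') (i : Fin m) (j : ℕ) :
    valPS N τ ε (.var i) j ⊆ valPS N τ ε' (.var i) j := by
  rintro v ⟨κ, hlo, hhi, rfl⟩
  exact ⟨κ, le_trans (by omega) hlo, le_trans hhi (by omega), rfl⟩

theorem valPS_mono_skew_general {T : Type} {m : ℕ} (N : ℕ) (τ : Fin m → ℕ → T)
    (ε ε' : ℕ) (hεε : ε ≤ ε') (e : LExpr T m) (j : ℕ) :
    valPS N τ ε e j ⊆ valPS N τ ε' e j := by
  induction e generalizing j with
  | const c => exact subset_rfl
  | var i => exact valPS_var_mono_skew N τ hεε i j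
  | app k f es ih =>
    rintro v ⟨vs, hvs, rfl⟩
    exact ⟨vs, fun l => ih l j (hvs l), rfl⟩
  | offset e p c ih =>
    simp only [valPS]
    split_ifs
    · exact ih _
    · exact subset_rfl

/-- monotonicity of the partially synchronous LOLA valuation in
the skew: for every expression `e`, position `j ∈ {0,…,N}` and skews
`1 ≤ ε ≤ ε'`, one has `val_PS^ε(e)(j) ⊆ val_PS^{ε'}(e)(j)`. -/
theorem valPS_mono_skew {T : Type} {m : ℕ} (N : ℕ) (τ : Fin m → ℕ → T)
    (ε ε' : ℕ) (hε : 1 ≤ ε) (hεε : ε ≤ ε') (e : LExpr T m) (j : ℕ) (hj : j ≤ N) :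
    valPS N τ ε e j ⊆ valPS N τ ε' e j :=
  valPS_mono_skew_general N τ ε ε' hεε e j
end

section
/- Exponential bound on the number of possible evaluations under partial synchrony: for every non-recursive LOLA stream expression e, let v(e) denote the number of occurrences in e of stream variables. Then for every skew ε ≥ 1 and every position j ∈ {0,…,N}, the set of partially synchronous values val_PS^ε(e)(j) is finite and has cardinality at most (2ε − 1)^{v(e)}. -/
/-- The number of occurrences of stream variables in a LOLA expression. -/
def numVarOcc {T : Type} {m : ℕ} : LExpr T m → ℕ
  | .const _ => 0
  | .var _ => 1
  | .app k _ es => ∑ l : Fin k, numVarOcc (es l)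
  | .offset e _ _ => numVarOcc e

/-! A variable occurrence can read only the `2ε - 1` positions of its skew window, a function
application takes at most the product of its arguments' counts, and an offset either shifts the
position or yields the single default. Counting with `Set.encard` makes finiteness come for free. -/

section valPS

variable {T : Type} {m : ℕ} (N : ℕ) (τ : Fin m → ℕ → T) (ε : ℕ)

-- Truncated subtraction clamps the window at `0`; the clamp at `N` is dropped.
theorem valPS_var_subset (i : Fin m) (j : ℕ) :
    valPS N τ ε (.var i) j ⊆ τ i '' Set.Icc (j + 1 - ε) (j + ε - 1) := by
  rintro _ ⟨κ, hlo, hhi, rfl⟩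
  exact ⟨κ, ⟨by omega, by omega⟩, rfl⟩

theorem valPS_var_encard_le (i : Fin m) (j : ℕ) :
    (valPS N τ ε (.var i) j).encard ≤ (2 * ε - 1 : ℕ) :=
  calc (valPS N τ ε (.var i) j).encard
      ≤ (τ i '' Set.Icc (j + 1 - ε) (j + ε - 1)).encard :=
        Set.encard_le_encard (valPS_var_subset N τ ε i j)
    _ ≤ (Set.Icc (j + 1 - ε) (j + ε - 1)).encard := Set.encard_image_le _ _
    _ ≤ (2 * ε - 1 : ℕ) := by
        rw [← Finset.coe_Icc, Set.encard_coe_eq_coe_finsetCard, Nat.card_Icc]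
        exact_mod_cast (by omega)

theorem valPS_app_eq_image_pi (k : ℕ) (f : (Fin k → T) → T) (es : Fin k → LExpr T m)
    (j : ℕ) :
    valPS N τ ε (.app k f es) j = f '' Set.univ.pi fun l => valPS N τ ε (es l) j := by
  ext v
  simp [valPS]

theorem valPS_encard_le (hε : 1 ≤ ε) (e : LExpr T m) (j : ℕ) :
    (valPS N τ ε e j).encard ≤ ((2 * ε - 1) ^ numVarOcc e : ℕ) := by
  induction e generalizing j with
  | const c => simp [valPS, numVarOcc]
  | var i => simpa [numVarOcc] using valPS_var_encard_le N τ ε i j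
  | app k f es ih =>
      rw [valPS_app_eq_image_pi]
      calc (f '' Set.univ.pi fun l => valPS N τ ε (es l) j).encard
          ≤ (Set.univ.pi fun l => valPS N τ ε (es l) j).encard := Set.encard_image_le _ _
        _ = ∏ l, (valPS N τ ε (es l) j).encard := Set.encard_pi_eq_prod_encard
        _ ≤ ∏ l, (((2 * ε - 1) ^ numVarOcc (es l) : ℕ) : ℕ∞) :=
            Finset.prod_le_prod' fun l _ => ih l j
        _ = ((2 * ε - 1) ^ numVarOcc (.app k f es) : ℕ) := by
            rw [numVarOcc, ← Finset.prod_pow_eq_pow_sum, Nat.cast_prod]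
  | offset e p c ih =>
      unfold valPS
      split_ifs
      · simpa [numVarOcc] using ih _
      · rw [Set.encard_singleton]
        exact_mod_cast Nat.one_le_pow _ _ (by omega)

end valPS

theorem valPS_card_bound_general {T : Type} {m : ℕ} (N : ℕ) (τ : Fin m → ℕ → T)
    (ε : ℕ) (hε : 1 ≤ ε) (e : LExpr T m) (j : ℕ) :
    (valPS N τ ε e j).Finite ∧
      (valPS N τ ε e j).ncard ≤ (2 * ε - 1) ^ numVarOcc e :=
  Set.encard_le_coe_iff_finite_ncard_le.1 (valPS_encard_le N τ ε hε e j)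

/-- exponential bound on the number of possible evaluations under
partial synchrony: for every expression `e` with `v(e)` occurrences of stream
variables, every skew `ε ≥ 1` and position `j ∈ {0,…,N}`, the set
`val_PS^ε(e)(j)` is finite with at most `(2ε − 1)^{v(e)}` elements. -/
theorem valPS_card_bound {T : Type} {m : ℕ} (N : ℕ) (τ : Fin m → ℕ → T)
    (ε : ℕ) (hε : 1 ≤ ε) (e : LExpr T m) (j : ℕ) (hj : j ≤ N) :
    (valPS N τ ε e j).Finite ∧
      (valPS N τ ε e j).ncard ≤ (2 * ε - 1) ^ numVarOcc e :=
  valPS_card_bound_general N τ ε hε e j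
end
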